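/- arXiv:hep-th/9804156 — 3 statements merged into one kernel-verified Lean document; each statement's English description precedes it below -/
import Mathlib

section
/- With A, (·,·), Q as above and {F,G} := (F,QG), for all homogeneous F, G, H ∈ A the Leibniz defect of {·,·} lies in the ideal generated by the image of Q: {F, GH} - {F,G}H - (-1)^{|F||G|} G{F,H} = (-1)^{(|F|+1)(|G|+1)}(QG)(F,H) + (-1)^{|G|}(F,G)(QH), which is an element of A·Q(A). -/
theorem stmt_2 {k A : Type*} [Field k] [CharZero k] [Ring A] [Algebra k A]
    (H : ZMod 2 → A → Prop)
    (br : A → A → A)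
    (hbr_addl : ∀ F G X : A, br (F + G) X = br F X + br G X)
    (hbr_addr : ∀ F G X : A, br X (F + G) = br X F + br X G)
    (hsupercomm : ∀ (p q : ZMod 2) (F G : A), H p F → H q G →
      F * G = (-1 : A) ^ (p * q).val * (G * F))
    (hbr_grade : ∀ (p q : ZMod 2) (F G : A), H p F → H q G → H (p + q + 1) (br F G))
    (hanti : ∀ (p q : ZMod 2) (F G : A), H p F → H q G →
      br F G = -((-1 : A) ^ ((p + 1) * (q + 1)).val * br G F))
    (hleib : ∀ (p q : ZMod 2) (F G X : A), H p F → H q G →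
      br F (G * X) = br F G * X + (-1 : A) ^ (q * (p + 1)).val * (G * br F X))
    (hjac : ∀ (p q r : ZMod 2) (F G X : A), H p F → H q G → H r X →
      (-1 : A) ^ ((p + 1) * (r + 1)).val * br F (br G X)
        + (-1 : A) ^ ((q + 1) * (p + 1)).val * br G (br X F)
        + (-1 : A) ^ ((r + 1) * (q + 1)).val * br X (br F G) = 0)
    (Q : A → A)
    (hQadd : ∀ F G : A, Q (F + G) = Q F + Q G)
    (hQodd : ∀ (p : ZMod 2) (F : A), H p F → H (p + 1) (Q F))
    (hQder : ∀ (p : ZMod 2) (F G : A), H p F →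
      Q (F * G) = Q F * G + (-1 : A) ^ p.val * (F * Q G))
    (hQbr : ∀ (p : ZMod 2) (F G : A), H p F →
      Q (br F G) = br (Q F) G + (-1 : A) ^ ((p + 1 : ZMod 2)).val * br F (Q G))
    (hQQ : ∀ F : A, Q (Q F) = 0)
    :
    ∀ (p q r : ZMod 2) (F G X : A), H p F → H q G → H r X →
      (br F (Q (G * X)) - br F (Q G) * X - (-1 : A) ^ (p * q).val * (G * br F (Q X))
        = (-1 : A) ^ ((p + 1) * (q + 1)).val * (Q G * br F X)
          + (-1 : A) ^ q.val * (br F G * Q X))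
      ∧ ((-1 : A) ^ ((p + 1) * (q + 1)).val * (Q G * br F X)
          + (-1 : A) ^ q.val * (br F G * Q X) ∈ Ideal.span (Set.range Q)) := by

  intro p q r F G X hF hG hX
  -- basic additivity consequences for br in the second argument
  have hbr0 : ∀ Y : A, br Y 0 = 0 := by
    intro Y
    have h := hbr_addr 0 0 Y
    have h2 : br Y 0 + 0 = br Y 0 + br Y 0 := by
      rw [add_zero]; simpa using h
    exact (add_left_cancel h2).symm
  have hbrneg : ∀ Y y : A, br Y (-y) = -(br Y y) := by
    intro Y y
    have h := hbr_addr y (-y) Y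
    rw [add_neg_cancel, hbr0] at h
    exact eq_neg_of_add_eq_zero_right h.symm
  have hbrc : ∀ (c : A), (c = 1 ∨ c = -1) → ∀ (Y y : A), br Y (c * y) = c * br Y y := by
    rintro c (rfl | rfl) Y y
    · rw [one_mul, one_mul]
    · rw [neg_one_mul, neg_one_mul, hbrneg]
  have h01 : ∀ a : ZMod 2, a = 0 ∨ a = 1 := by decide
  have hc : (-1 : A) ^ q.val = 1 ∨ (-1 : A) ^ q.val = -1 := neg_one_pow_eq_or A q.val
  have hq1 := hQder q G X hG
  have h2 := hleib p (q + 1) F (Q G) X hF (hQodd q G hG)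
  have h3 := hleib p q F G (Q X) hF hG
  have e1 : ((q + 1) * (p + 1) : ZMod 2) = (p + 1) * (q + 1) := mul_comm _ _
  have e2 : (-1 : A) ^ q.val * (-1 : A) ^ ((q * (p + 1)).val) = (-1 : A) ^ ((p * q).val) := by
    rw [← pow_add, neg_one_pow_eq_pow_mod_two, neg_one_pow_eq_pow_mod_two (n := (p * q).val)]
    congr 1
    rcases h01 p with hp | hp <;> rcases h01 q with hq | hq <;> subst hp <;> subst hq <;> decide
  have key : (-1 : A) ^ q.val * (br F G * Q X + (-1 : A) ^ ((q * (p + 1)).val) * (G * br F (Q X)))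
      = (-1 : A) ^ q.val * (br F G * Q X) + (-1 : A) ^ ((p * q).val) * (G * br F (Q X)) := by
    rw [mul_add]
    congr 1
    rw [← mul_assoc, e2]
  constructor
  · rw [hq1, hbr_addr, hbrc _ hc, h2, h3, e1, key]
    abel
  · have hmemG : Q G ∈ Ideal.span (Set.range Q) := Ideal.subset_span ⟨G, rfl⟩
    have hmemX : Q X ∈ Ideal.span (Set.range Q) := Ideal.subset_span ⟨X, rfl⟩
    have hsc := hsupercomm (q + 1) (p + r + 1) (Q G) (br F X) (hQodd q G hG)
      (hbr_grade p r F X hF hX)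
    refine Ideal.add_mem _ ?_ ?_
    · rw [hsc, ← mul_assoc, ← mul_assoc]
      exact Ideal.mul_mem_left _ _ hmemG
    · rw [← mul_assoc]
      exact Ideal.mul_mem_left _ _ hmemX
end

section
/- With A, (·,·), Q as above and {F,G} := (F,QG), the bracket {·,·} satisfies the graded Jacobi identity modulo the ideal I generated by the image of Q: Σ_{cyclic F,G,H} (-1)^{|F||H|} {F,{G,H}} ∈ I for all homogeneous F,G,H ∈ A. -/
/-!
Write `{F, G} = (F, QG)`. Since `Q² = 0` and `Q` differentiates the antibracket,
`Q {G, X} = (QG, QX)`, so `{F, {G, X}} = (F, (QG, QX))`. The graded Jacobi identity for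
`F, QG, QX` then gives the claim once `Q` is moved across the outer bracket of its second and
third terms: `(QG, Y) = Q (G, Y) ± (G, QY)`, and `Q (G, Y)` lies in the ideal.
-/

section Signs

variable {A : Type*} [Ring A]

theorem neg_one_pow_zmod_two_val_add (a b : ZMod 2) :
    (-1 : A) ^ (a + b).val = (-1) ^ a.val * (-1) ^ b.val := by
  rw [← pow_add, ZMod.val_add, ← neg_one_pow_eq_pow_mod_two]

theorem neg_one_pow_zmod_two_val_add_one (a : ZMod 2) :
    (-1 : A) ^ (a + 1).val = -(-1) ^ a.val := by
  rw [neg_one_pow_zmod_two_val_add, ZMod.val_one, pow_one, mul_neg_one]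

theorem map_zero_of_additive {M N : Type*} [AddGroup M] [AddGroup N] {f : M → N}
    (hf : ∀ x y, f (x + y) = f x + f y) : f 0 = 0 :=
  (AddMonoidHom.mk' f hf).map_zero

theorem map_neg_one_pow_mul_of_additive {f : A → A} (hf : ∀ x y, f (x + y) = f x + f y)
    (n : ℕ) (x : A) : f ((-1) ^ n * x) = (-1) ^ n * f x := by
  rcases neg_one_pow_eq_or A n with h | h
  · simp [h]
  · simpa [h] using map_neg (AddMonoidHom.mk' f hf) x

end Signs

section DifferentialAntibracket

variable {A : Type*} [Ring A] {H : ZMod 2 → A → Prop} {br : A → A → A} {Q : A → A}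

theorem Q_bracket_Q_right
    (hbr_addr : ∀ F G X : A, br X (F + G) = br X F + br X G)
    (hQbr : ∀ (p : ZMod 2) (F G : A), H p F →
      Q (br F G) = br (Q F) G + (-1 : A) ^ ((p + 1 : ZMod 2)).val * br F (Q G))
    (hQQ : ∀ F : A, Q (Q F) = 0) {p : ZMod 2} {F : A} (hF : H p F) (G : A) :
    Q (br F (Q G)) = br (Q F) (Q G) := by
  rw [hQbr p F (Q G) hF, hQQ, map_zero_of_additive (hbr_addr · · F), mul_zero, add_zero]

theorem Q_bracket_Q_left
    (hbr_addl : ∀ F G X : A, br (F + G) X = br F X + br G X)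
    (hQodd : ∀ (p : ZMod 2) (F : A), H p F → H (p + 1) (Q F))
    (hQbr : ∀ (p : ZMod 2) (F G : A), H p F →
      Q (br F G) = br (Q F) G + (-1 : A) ^ ((p + 1 : ZMod 2)).val * br F (Q G))
    (hQQ : ∀ F : A, Q (Q F) = 0) {r : ZMod 2} {X : A} (hX : H r X) (F : A) :
    Q (br (Q X) F) = (-1) ^ r.val * br (Q X) (Q F) := by
  rw [hQbr (r + 1) (Q X) F (hQodd r X hX), hQQ,
    map_zero_of_additive (f := (br · F)) (hbr_addl · · F), zero_add,
    CharTwo.add_cancel_right]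

theorem bracket_Q_left_smodEq
    (hQbr : ∀ (p : ZMod 2) (F G : A), H p F →
      Q (br F G) = br (Q F) G + (-1 : A) ^ ((p + 1 : ZMod 2)).val * br F (Q G))
    {q : ZMod 2} {G : A} (hG : H q G) (Y : A) :
    br (Q G) Y ≡ (-1) ^ q.val * br G (Q Y) [SMOD Ideal.span (Set.range Q)] := by
  rw [SModEq.sub_mem]
  have h := hQbr q G Y hG
  rw [neg_one_pow_zmod_two_val_add_one, neg_mul, ← sub_eq_add_neg] at h
  exact h ▸ Ideal.subset_span ⟨_, rfl⟩

theorem jacobi_Q_Q_smodEq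
    (hbr_addl : ∀ F G X : A, br (F + G) X = br F X + br G X)
    (hbr_addr : ∀ F G X : A, br X (F + G) = br X F + br X G)
    (hjac : ∀ (p q r : ZMod 2) (F G X : A), H p F → H q G → H r X →
      (-1 : A) ^ ((p + 1) * (r + 1)).val * br F (br G X)
        + (-1 : A) ^ ((q + 1) * (p + 1)).val * br G (br X F)
        + (-1 : A) ^ ((r + 1) * (q + 1)).val * br X (br F G) = 0)
    (hQodd : ∀ (p : ZMod 2) (F : A), H p F → H (p + 1) (Q F))
    (hQbr : ∀ (p : ZMod 2) (F G : A), H p F →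
      Q (br F G) = br (Q F) G + (-1 : A) ^ ((p + 1 : ZMod 2)).val * br F (Q G))
    (hQQ : ∀ F : A, Q (Q F) = 0)
    {p q r : ZMod 2} {F G X : A} (hF : H p F) (hG : H q G) (hX : H r X) :
    (-1 : A) ^ ((p + 1) * r).val * br F (br (Q G) (Q X))
        + (-1 : A) ^ (q * (p + 1) + (q + r)).val * br G (br (Q X) (Q F))
        + (-1 : A) ^ (r * q + r).val * br X (br (Q F) (Q G))
      ≡ 0 [SMOD Ideal.span (Set.range Q)] := by
  have jacobi := hjac p (q + 1) (r + 1) F (Q G) (Q X) hF (hQodd q G hG) (hQodd r X hX)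
  simp only [CharTwo.add_cancel_right] at jacobi
  have hsecond : br (Q G) (br (Q X) F)
      ≡ (-1) ^ (q + r).val * br G (br (Q X) (Q F)) [SMOD Ideal.span (Set.range Q)] := by
    refine (bracket_Q_left_smodEq hQbr hG _).trans ?_
    rw [Q_bracket_Q_left hbr_addl hQodd hQbr hQQ hX,
      map_neg_one_pow_mul_of_additive (hbr_addr · · G), ← mul_assoc,
      ← neg_one_pow_zmod_two_val_add]
  have hthird : br (Q X) (br F (Q G))
      ≡ (-1) ^ r.val * br X (br (Q F) (Q G)) [SMOD Ideal.span (Set.range Q)] := by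
    rw [← Q_bracket_Q_right hbr_addr hQbr hQQ hF]
    exact bracket_Q_left_smodEq hQbr hX _
  have hsum := ((SModEq.refl (U := Ideal.span (Set.range Q))
    ((-1 : A) ^ ((p + 1) * r).val * br F (br (Q G) (Q X)))).add
    (hsecond.smul ((-1 : A) ^ (q * (p + 1)).val))).add
    (hthird.smul ((-1 : A) ^ (r * q).val))
  simp only [smul_eq_mul, ← mul_assoc, ← neg_one_pow_zmod_two_val_add] at hsum
  rw [jacobi] at hsum
  exact hsum.symm

end DifferentialAntibracket

theorem stmt_3_general {A : Type*} [Ring A]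
    (H : ZMod 2 → A → Prop)
    (br : A → A → A)
    (hbr_addl : ∀ F G X : A, br (F + G) X = br F X + br G X)
    (hbr_addr : ∀ F G X : A, br X (F + G) = br X F + br X G)
    (hjac : ∀ (p q r : ZMod 2) (F G X : A), H p F → H q G → H r X →
      (-1 : A) ^ ((p + 1) * (r + 1)).val * br F (br G X)
        + (-1 : A) ^ ((q + 1) * (p + 1)).val * br G (br X F)
        + (-1 : A) ^ ((r + 1) * (q + 1)).val * br X (br F G) = 0)
    (Q : A → A)
    (hQodd : ∀ (p : ZMod 2) (F : A), H p F → H (p + 1) (Q F))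
    (hQbr : ∀ (p : ZMod 2) (F G : A), H p F →
      Q (br F G) = br (Q F) G + (-1 : A) ^ ((p + 1 : ZMod 2)).val * br F (Q G))
    (hQQ : ∀ F : A, Q (Q F) = 0)
    :
    ∀ (p q r : ZMod 2) (F G X : A), H p F → H q G → H r X →
      (-1 : A) ^ (p * r).val * br F (Q (br G (Q X)))
        + (-1 : A) ^ (q * p).val * br G (Q (br X (Q F)))
        + (-1 : A) ^ (r * q).val * br X (Q (br F (Q G)))
        ∈ Ideal.span (Set.range Q) := by
  intro p q r F G X hF hG hX
  have sign₁ : p * r = r + (p + 1) * r := by grind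
  have sign₂ : q * p = r + (q * (p + 1) + (q + r)) := by grind
  have sign₃ : r * q = r + (r * q + r) := by grind
  have h := (jacobi_Q_Q_smodEq hbr_addl hbr_addr hjac hQodd hQbr hQQ hF hG hX).smul
    ((-1 : A) ^ r.val)
  simp only [smul_eq_mul, mul_zero, SModEq.zero, mul_add ((-1 : A) ^ r.val), ← mul_assoc,
    ← neg_one_pow_zmod_two_val_add] at h
  rw [← sign₁, ← sign₂, ← sign₃] at h
  rwa [Q_bracket_Q_right hbr_addr hQbr hQQ hG, Q_bracket_Q_right hbr_addr hQbr hQQ hX,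
    Q_bracket_Q_right hbr_addr hQbr hQQ hF]

theorem stmt_3 {k A : Type*} [Field k] [CharZero k] [Ring A] [Algebra k A]
    (H : ZMod 2 → A → Prop)
    (br : A → A → A)
    (hbr_addl : ∀ F G X : A, br (F + G) X = br F X + br G X)
    (hbr_addr : ∀ F G X : A, br X (F + G) = br X F + br X G)
    (hsupercomm : ∀ (p q : ZMod 2) (F G : A), H p F → H q G →
      F * G = (-1 : A) ^ (p * q).val * (G * F))
    (hbr_grade : ∀ (p q : ZMod 2) (F G : A), H p F → H q G → H (p + q + 1) (br F G))
    (hanti : ∀ (p q : ZMod 2) (F G : A), H p F → H q G →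
      br F G = -((-1 : A) ^ ((p + 1) * (q + 1)).val * br G F))
    (hleib : ∀ (p q : ZMod 2) (F G X : A), H p F → H q G →
      br F (G * X) = br F G * X + (-1 : A) ^ (q * (p + 1)).val * (G * br F X))
    (hjac : ∀ (p q r : ZMod 2) (F G X : A), H p F → H q G → H r X →
      (-1 : A) ^ ((p + 1) * (r + 1)).val * br F (br G X)
        + (-1 : A) ^ ((q + 1) * (p + 1)).val * br G (br X F)
        + (-1 : A) ^ ((r + 1) * (q + 1)).val * br X (br F G) = 0)
    (Q : A → A)
    (hQadd : ∀ F G : A, Q (F + G) = Q F + Q G)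
    (hQodd : ∀ (p : ZMod 2) (F : A), H p F → H (p + 1) (Q F))
    (hQder : ∀ (p : ZMod 2) (F G : A), H p F →
      Q (F * G) = Q F * G + (-1 : A) ^ p.val * (F * Q G))
    (hQbr : ∀ (p : ZMod 2) (F G : A), H p F →
      Q (br F G) = br (Q F) G + (-1 : A) ^ ((p + 1 : ZMod 2)).val * br F (Q G))
    (hQQ : ∀ F : A, Q (Q F) = 0)
    :
    ∀ (p q r : ZMod 2) (F G X : A), H p F → H q G → H r X →
      (-1 : A) ^ (p * r).val * br F (Q (br G (Q X)))
        + (-1 : A) ^ (q * p).val * br G (Q (br X (Q F)))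
        + (-1 : A) ^ (r * q).val * br X (Q (br F (Q G)))
        ∈ Ideal.span (Set.range Q) :=
  stmt_3_general H br hbr_addl hbr_addr hjac Q hQodd hQbr hQQ
end

section
/- Let A, (·,·), Q, I, {·,·} be as above. For any homogeneous H ∈ A, the element F := (-1)^{|H|} QH is Q-closed, and the Hamiltonian derivation X = (F,·) satisfies, for all G ∈ A: (F,G) - {H,G} ∈ I. In other words, the antibracket-Hamiltonian vector field of (-1)^{|H|}QH restricts on the zero locus of Q to the Poisson-Hamiltonian vector field of H. -/
/-! Since `Q` is an odd derivation of the antibracket, `Q (H, G) = (QH, G) ± (H, QG)`, and the sign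
`(-1)^{|H|}` in front of `QH` is exactly the one that turns `(F, G) - (H, QG)` into `±Q (H, G)`,
an element of the ideal generated by the image of `Q`. -/

lemma AddMonoidHom.map_neg_one_pow_mul {A B : Type*} [Ring A] [Ring B] (f : A →+ B) (n : ℕ)
    (x : A) : f ((-1) ^ n * x) = (-1) ^ n * f x := by
  rcases Nat.even_or_odd n with hn | hn <;> simp [hn.neg_one_pow]

lemma ZMod.neg_one_pow_val_add_one {M : Type*} [Monoid M] [HasDistribNeg M] (p : ZMod 2) :
    (-1 : M) ^ (p + 1).val = -(-1) ^ p.val := by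
  fin_cases p
  · show (-1 : M) ^ 1 = -(-1) ^ 0
    simp
  · show (-1 : M) ^ 0 = -(-1) ^ 1
    simp

lemma br_neg_one_pow_mul_sub_eq_neg_one_pow_mul {A : Type*} [Ring A] (br : A → A → A)
    (hbr_addl : ∀ F G X : A, br (F + G) X = br F X + br G X) (Q : A → A) (p : ZMod 2)
    (F G : A) (hQbr : Q (br F G) = br (Q F) G + (-1 : A) ^ (p + 1).val * br F (Q G)) :
    br ((-1) ^ p.val * Q F) G - br F (Q G) = (-1) ^ p.val * Q (br F G) := by
  have hbr_sign : br ((-1) ^ p.val * Q F) G = (-1) ^ p.val * br (Q F) G :=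
    (AddMonoidHom.mk' (br · G) (hbr_addl · · G)).map_neg_one_pow_mul p.val (Q F)
  have hsign_sq : (-1 : A) ^ p.val * (-1) ^ p.val = 1 := by
    rw [← pow_add, ← two_mul, pow_mul, neg_one_sq, one_pow]
  rw [hbr_sign, hQbr, ZMod.neg_one_pow_val_add_one, mul_add, neg_mul, mul_neg, ← mul_assoc,
    hsign_sq, one_mul, sub_eq_add_neg]

theorem stmt_8_general {A : Type*} [Ring A]
    (H : ZMod 2 → A → Prop)
    (br : A → A → A)
    (hbr_addl : ∀ F G X : A, br (F + G) X = br F X + br G X)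
    (Q : A → A)
    (hQadd : ∀ F G : A, Q (F + G) = Q F + Q G)
    (hQbr : ∀ (p : ZMod 2) (F G : A), H p F →
      Q (br F G) = br (Q F) G + (-1 : A) ^ ((p + 1 : ZMod 2)).val * br F (Q G))
    (hQQ : ∀ F : A, Q (Q F) = 0)
    :
    ∀ (p : ZMod 2) (Ham : A), H p Ham →
      Q ((-1 : A) ^ p.val * Q Ham) = 0
      ∧ ∀ G : A, br ((-1 : A) ^ p.val * Q Ham) G - br Ham (Q G)
          ∈ Ideal.span (Set.range Q) := by
  intro p Ham hH
  refine ⟨?_, fun G => ?_⟩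
  · have hQ_sign := (AddMonoidHom.mk' Q hQadd).map_neg_one_pow_mul p.val (Q Ham)
    simp only [AddMonoidHom.mk'_apply, hQQ, mul_zero] at hQ_sign
    exact hQ_sign
  · rw [br_neg_one_pow_mul_sub_eq_neg_one_pow_mul br hbr_addl Q p Ham G (hQbr p Ham G hH)]
    exact Ideal.mul_mem_left _ _ (Ideal.subset_span ⟨_, rfl⟩)

theorem stmt_8 {k A : Type*} [Field k] [CharZero k] [Ring A] [Algebra k A]
    (H : ZMod 2 → A → Prop)
    (br : A → A → A)
    (hbr_addl : ∀ F G X : A, br (F + G) X = br F X + br G X)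
    (hbr_addr : ∀ F G X : A, br X (F + G) = br X F + br X G)
    (hsupercomm : ∀ (p q : ZMod 2) (F G : A), H p F → H q G →
      F * G = (-1 : A) ^ (p * q).val * (G * F))
    (hbr_grade : ∀ (p q : ZMod 2) (F G : A), H p F → H q G → H (p + q + 1) (br F G))
    (hanti : ∀ (p q : ZMod 2) (F G : A), H p F → H q G →
      br F G = -((-1 : A) ^ ((p + 1) * (q + 1)).val * br G F))
    (hleib : ∀ (p q : ZMod 2) (F G X : A), H p F → H q G →
      br F (G * X) = br F G * X + (-1 : A) ^ (q * (p + 1)).val * (G * br F X))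
    (hjac : ∀ (p q r : ZMod 2) (F G X : A), H p F → H q G → H r X →
      (-1 : A) ^ ((p + 1) * (r + 1)).val * br F (br G X)
        + (-1 : A) ^ ((q + 1) * (p + 1)).val * br G (br X F)
        + (-1 : A) ^ ((r + 1) * (q + 1)).val * br X (br F G) = 0)
    (Q : A → A)
    (hQadd : ∀ F G : A, Q (F + G) = Q F + Q G)
    (hQodd : ∀ (p : ZMod 2) (F : A), H p F → H (p + 1) (Q F))
    (hQder : ∀ (p : ZMod 2) (F G : A), H p F →
      Q (F * G) = Q F * G + (-1 : A) ^ p.val * (F * Q G))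
    (hQbr : ∀ (p : ZMod 2) (F G : A), H p F →
      Q (br F G) = br (Q F) G + (-1 : A) ^ ((p + 1 : ZMod 2)).val * br F (Q G))
    (hQQ : ∀ F : A, Q (Q F) = 0)
    :
    ∀ (p : ZMod 2) (Ham : A), H p Ham →
      Q ((-1 : A) ^ p.val * Q Ham) = 0
      ∧ ∀ G : A, br ((-1 : A) ^ p.val * Q Ham) G - br Ham (Q G)
          ∈ Ideal.span (Set.range Q) :=
  stmt_8_general H br hbr_addl Q hQadd hQbr hQQ
end
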